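/- Let f : X → Y be a continuous map, where X is a path-connected normal topological space and Y is a metrizable space with covering dimension dim Y ≤ n. If cat* f ≤ m, then cat X ≤ n + m. -/

import Mathlib

open Set Topology

/-- A subset `U` of a topological space `X` is `X`-contractible if the inclusion
`U ↪ X` is nullhomotopic (i.e. `U` can be contracted to a point within `X`). -/
def ContractibleIn {X : Type*} [TopologicalSpace X] (U : Set X) : Prop :=
  ContinuousMap.Nullhomotopic (⟨fun x => (x : X), continuous_subtype_val⟩ : C(U, X))

/-- `cat X ≤ n` : the Lusternik–Schnirelmann category of `X` is at most `n`, i.e.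
`X` admits an open cover by `n + 1` `X`-contractible sets. -/
def CatLE (X : Type*) [TopologicalSpace X] (n : ℕ) : Prop :=
  ∃ U : Fin (n + 1) → Set X,
    (∀ i, IsOpen (U i)) ∧ (∀ i, ContractibleIn (U i)) ∧ (⋃ i, U i) = univ

/-- A family `U` of subsets of `X` is uniformly `f`-contractible if every `y ∈ Y` has a
neighborhood `V` such that each `U i ∩ f ⁻¹' V` is `X`-contractible. -/
def UnifContractible {X Y : Type*} [TopologicalSpace X] [TopologicalSpace Y]
    (f : X → Y) {ι : Type*} (U : ι → Set X) : Prop :=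
  ∀ y : Y, ∃ V ∈ 𝓝 y, ∀ i, ContractibleIn (U i ∩ f ⁻¹' V)

/-- `cat* f ≤ n` : `X` admits a uniformly `f`-contractible open cover by `n + 1` sets. -/
def CatStarLE {X Y : Type*} [TopologicalSpace X] [TopologicalSpace Y]
    (f : X → Y) (n : ℕ) : Prop :=
  ∃ U : Fin (n + 1) → Set X,
    (∀ i, IsOpen (U i)) ∧ (⋃ i, U i) = univ ∧ UnifContractible f U

/-- `dim Y ≤ n` : every open cover of `Y` admits an open refinement of multiplicity
at most `n + 1` (covering dimension). -/
def CovDimLE (Y : Type*) [TopologicalSpace Y] (n : ℕ) : Prop :=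
  ∀ C : Set (Set Y), (∀ c ∈ C, IsOpen c) → ⋃₀ C = univ →
    ∃ W : Set (Set Y), (∀ w ∈ W, IsOpen w) ∧ ⋃₀ W = univ ∧
      (∀ w ∈ W, ∃ c ∈ C, w ⊆ c) ∧ ∀ y : Y, {w ∈ W | y ∈ w}.encard ≤ (n + 1 : ℕ)

/-!
Ostrand's trick. By uniform `f`-contractibility every `y` has a neighbourhood `V y` with all
`U i ∩ f⁻¹' (V y)` contractible in `X`. As `dim Y ≤ n` and `Y` is metrizable, the cover of `Y` by
the `V y` is refined by `n + 1` families of pairwise disjoint open sets, and `U` is `m + 1` such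
families. In a normal space a cover by `N + 1` disjoint families can be spread out, using levels
of a bump covering, into any number `k` of disjoint families ("columns") such that each point
misses at most `N` of them. With `k = n + m + 1` columns for both covers, each point lies in a
column common to both, and intersecting the two columns gives `n + m + 1` families of disjoint
open sets, each inside some `U i ∩ f⁻¹' (V y)`. Finally, a disjoint union of open sets that are
contractible in the path-connected space `X` is contractible in `X`.
-/

open Function Metric
open scoped Finset unitInterval

section Contractible

variable {X : Type*} [TopologicalSpace X]

theorem ContractibleIn.mono {A B : Set X} (hB : ContractibleIn B) (h : A ⊆ B) :
    ContractibleIn A :=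
  hB.comp_left ⟨inclusion h, continuous_inclusion h⟩

theorem ContractibleIn.homotopic_const [PathConnectedSpace X] {U : Set X}
    (hU : ContractibleIn U) (x₀ : X) :
    (⟨fun x => (x : X), continuous_subtype_val⟩ : C(U, X)).Homotopic (.const U x₀) :=
  let ⟨y, hy⟩ := hU
  hy.trans ⟨(PathConnectedSpace.somePath y x₀).toHomotopyConst⟩

theorem ContractibleIn.sUnion [PathConnectedSpace X] {F : Set (Set X)}
    (hFo : ∀ s ∈ F, IsOpen s) (hFc : ∀ s ∈ F, ContractibleIn s) (hFd : F.PairwiseDisjoint id) :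
    ContractibleIn (⋃₀ F) := by
  obtain ⟨x₀⟩ := PathConnectedSpace.nonempty (X := X)
  let H (s : F) := ((hFc s s.2).homotopic_const x₀).some
  let S (s : F) : Set (I × ⋃₀ F) := {z | (z.2 : X) ∈ (s : Set X)}
  let φ (s : F) : C(S s, X) := (H s).toContinuousMap.comp
    ⟨fun z => (z.1.1, ⟨z.1.2, z.2⟩), by fun_prop⟩
  have hφ (s t : F) (z) (hs : z ∈ S s) (ht : z ∈ S t) : φ s ⟨z, hs⟩ = φ t ⟨z, ht⟩ := by
    obtain rfl : s = t := Subtype.ext (hFd.elim s.2 t.2 (not_disjoint_iff.2 ⟨_, hs, ht⟩))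
    rfl
  have hS (z : I × ⋃₀ F) : ∃ s, S s ∈ 𝓝 z := by
    obtain ⟨s, hs, hz⟩ := z.2.2
    exact ⟨⟨s, hs⟩, ((hFo s hs).preimage (by fun_prop)).mem_nhds hz⟩
  refine ⟨x₀, ⟨⟨ContinuousMap.liftCover S φ hφ hS, fun x => ?_, fun x => ?_⟩⟩⟩ <;>
  · obtain ⟨s, hs, hx⟩ := x.2
    exact (ContinuousMap.liftCover_coe (⟨_, hx⟩ : S ⟨s, hs⟩)).trans (by simp [φ])

end Contractible

section FirstIndexAbove

variable {X ι : Type*} [LinearOrder ι]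

def firstIndexAbove (g : ι → X → ℝ) (t : ℝ) (i : ι) : Set X :=
  {x | t < g i x ∧ ∀ i' < i, g i' x < t}

theorem isOpen_firstIndexAbove [TopologicalSpace X] [Finite ι] {g : ι → X → ℝ}
    (hg : ∀ i, Continuous (g i)) (t : ℝ) (i : ι) : IsOpen (firstIndexAbove g t i) := by
  have : firstIndexAbove g t i = {x | t < g i x} ∩ ⋂ i' < i, {x | g i' x < t} := by
    ext x; simp [firstIndexAbove]
  rw [this]
  exact (isOpen_lt continuous_const (hg i)).inter <| isOpen_iInter_of_finite fun i' =>
    isOpen_iInter_of_finite fun _ => isOpen_lt (hg i') continuous_const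

theorem pairwise_disjoint_firstIndexAbove (g : ι → X → ℝ) (t : ℝ) :
    Pairwise (Disjoint on firstIndexAbove g t) :=
  (pairwise_disjoint_on _).2 fun _ _ hij => Set.disjoint_left.2 fun _ hx hx' =>
    (hx.1.trans (hx'.2 _ hij)).false

theorem exists_mem_firstIndexAbove [WellFoundedLT ι] {g : ι → X → ℝ} {t : ℝ} {x : X}
    (hne : ∀ i, g i x ≠ t) (hlt : ∃ i, t < g i x) : ∃ i, x ∈ firstIndexAbove g t i := by
  obtain ⟨i, hi⟩ := exists_minimal_of_wellFoundedLT _ hlt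
  exact ⟨i, hi.prop, fun i' hi' => (not_lt.1 (hi.not_prop_of_lt hi')).lt_of_ne (hne i')⟩

end FirstIndexAbove

theorem Function.Injective.exists_card_lt_forall_ne_of_notMem_range {ι κ α : Type*} [Fintype ι]
    [Fintype κ] {a : κ → α} (ha : Injective a) (v : ι → α) {i₀ : ι} (hi₀ : v i₀ ∉ range a) :
    ∃ s : Finset κ, #s < Fintype.card ι ∧ ∀ j ∉ s, ∀ i, v i ≠ a j := by
  classical
  let s := Finset.univ.filter fun j => ∃ i, v i = a j
  refine ⟨s, ?_, fun j hj i h => hj (Finset.mem_filter.2 ⟨Finset.mem_univ _, i, h⟩)⟩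
  calc #s = #(s.image a) := (Finset.card_image_of_injective _ ha).symm
    _ ≤ #((Finset.univ.erase i₀).image v) := by
        refine Finset.card_le_card fun y hy => ?_
        obtain ⟨j, hj, rfl⟩ := Finset.mem_image.1 hy
        obtain ⟨i, hi⟩ := (Finset.mem_filter.1 hj).2
        exact Finset.mem_image.2 ⟨i, Finset.mem_erase.2 ⟨by rintro rfl; exact hi₀ ⟨j, hi.symm⟩,
          Finset.mem_univ _⟩, hi⟩
    _ ≤ #(Finset.univ.erase i₀) := Finset.card_image_le
    _ < Fintype.card ι := Finset.card_erase_lt_of_mem (Finset.mem_univ _)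

theorem exists_columns_of_iUnion_eq_univ {X : Type*} [TopologicalSpace X] [NormalSpace X]
    {N : ℕ} (U : Fin (N + 1) → Set X) (hUo : ∀ i, IsOpen (U i)) (hU : ⋃ i, U i = univ)
    (k : ℕ) :
    ∃ V : Fin (N + 1) → Fin k → Set X, (∀ i j, IsOpen (V i j)) ∧ (∀ i j, V i j ⊆ U i) ∧
      (∀ j, Pairwise (Disjoint on fun i => V i j)) ∧
      ∀ x, ∃ s : Finset (Fin k), #s ≤ N ∧ ∀ j ∉ s, ∃ i, x ∈ V i j := by
  obtain ⟨g, hgU⟩ := BumpCovering.exists_isSubordinate_of_locallyFinite isClosed_univ U hUo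
    (locallyFinite_of_finite U) hU.ge
  let a (j : Fin k) : ℝ := 1 / ((j : ℝ) + 2)
  have ha_pos (j) : 0 < a j := by positivity
  have ha_lt_one (j) : a j < 1 := by
    simp only [a]
    rw [div_lt_one (by positivity)]
    linarith [Nat.cast_nonneg (α := ℝ) (j : ℕ)]
  have ha : Injective a := fun j j' h => Fin.ext (by simpa [a] using h)
  -- Column `j` sorts `x` to the first `i` with `g i x > a j`. This fails only if some `g i x`
  -- equals `a j`; as some `g i x = 1` exceeds every threshold, that happens for at most `N` `j`s.
  refine ⟨fun i j => firstIndexAbove (fun i => g i) (a j) i,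
    fun i j => isOpen_firstIndexAbove (fun i => (g i).continuous) _ i,
    fun i j x hx => ?_, fun j => pairwise_disjoint_firstIndexAbove _ _, fun x => ?_⟩
  · by_contra hxU
    have : g i x = 0 := image_eq_zero_of_notMem_tsupport fun h => hxU (hgU i h)
    exact (ha_pos j).not_ge (this ▸ hx.1.le)
  · have hx := g.ind_apply x (mem_univ x)
    obtain ⟨s, hs, hsx⟩ := ha.exists_card_lt_forall_ne_of_notMem_range (fun i => g i x)
      (i₀ := g.ind x (mem_univ x)) (by rintro ⟨j, hj⟩; exact (ha_lt_one j).ne (hj.trans hx))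
    refine ⟨s, Nat.lt_add_one_iff.1 (hs.trans_eq (Fintype.card_fin _)), fun j hj => ?_⟩
    exact exists_mem_firstIndexAbove (hsx j hj) ⟨_, hx.symm ▸ ha_lt_one j⟩

def CoveredByDisjointFamilies (X : Type*) [TopologicalSpace X] (P : Set X → Prop) (N : ℕ) :
    Prop :=
  ∃ F : Fin (N + 1) → Set (Set X), (∀ k, ∀ s ∈ F k, IsOpen s ∧ P s) ∧
    (∀ k, (F k).PairwiseDisjoint id) ∧ ⋃ k, ⋃₀ F k = univ

namespace CoveredByDisjointFamilies

variable {X : Type*} [TopologicalSpace X] {P Q : Set X → Prop} {N M : ℕ}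

theorem mono (h : CoveredByDisjointFamilies X P N) (hPQ : ∀ s, P s → Q s) :
    CoveredByDisjointFamilies X Q N :=
  let ⟨F, hF, hFd, hFc⟩ := h
  ⟨F, fun k s hs => (hF k s hs).imp_right (hPQ s), hFd, hFc⟩

theorem preimage {Y : Type*} [TopologicalSpace Y] {P : Set Y → Prop} {f : X → Y}
    (hf : Continuous f) (h : CoveredByDisjointFamilies Y P N) :
    CoveredByDisjointFamilies X (fun s => ∃ t, P t ∧ s = f ⁻¹' t) N := by
  obtain ⟨F, hF, hFd, hFc⟩ := h
  refine ⟨fun k => (f ⁻¹' ·) '' F k, ?_, fun k => ?_, ?_⟩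
  · rintro k _ ⟨t, ht, rfl⟩
    exact ⟨(hF k t ht).1.preimage hf, t, (hF k t ht).2, rfl⟩
  · rintro _ ⟨t, ht, rfl⟩ _ ⟨t', ht', rfl⟩ hne
    exact (hFd k ht ht' fun h => hne (h ▸ rfl)).preimage f
  · simp only [sUnion_image, ← sUnion_eq_biUnion, ← preimage_iUnion, hFc, preimage_univ]

theorem exists_columns [NormalSpace X] (h : CoveredByDisjointFamilies X P N) (k : ℕ) :
    ∃ C : Fin k → Set (Set X), (∀ j, ∀ c ∈ C j, IsOpen c ∧ ∃ a, P a ∧ c ⊆ a) ∧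
      (∀ j, (C j).PairwiseDisjoint id) ∧
      ∀ x, ∃ s : Finset (Fin k), #s ≤ N ∧ ∀ j ∉ s, x ∈ ⋃₀ C j := by
  obtain ⟨F, hF, hFd, hFc⟩ := h
  obtain ⟨V, hVo, hVF, hVd, hVc⟩ := exists_columns_of_iUnion_eq_univ (fun l => ⋃₀ F l)
    (fun l => isOpen_sUnion fun s hs => (hF l s hs).1) hFc k
  refine ⟨fun j => {c | ∃ l, ∃ a ∈ F l, c = V l j ∩ a}, ?_, fun j => ?_, fun x => ?_⟩
  · rintro j _ ⟨l, a, ha, rfl⟩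
    exact ⟨(hVo l j).inter (hF l a ha).1, a, (hF l a ha).2, inter_subset_right⟩
  · rintro _ ⟨l, a, ha, rfl⟩ _ ⟨l', a', ha', rfl⟩ hne
    rcases ne_or_eq l l' with hl | rfl
    · exact (hVd j hl).mono inter_subset_left inter_subset_left
    · have haa' : a ≠ a' := by rintro rfl; exact hne rfl
      exact (hFd l ha ha' haa').mono inter_subset_right inter_subset_right
  · obtain ⟨s, hs, hsx⟩ := hVc x
    refine ⟨s, hs, fun j hj => ?_⟩
    obtain ⟨l, hl⟩ := hsx j hj
    obtain ⟨a, ha, hxa⟩ := hVF l j hl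
    exact ⟨_, ⟨l, a, ha, rfl⟩, hl, hxa⟩

theorem inter [NormalSpace X] (hP : CoveredByDisjointFamilies X P N)
    (hQ : CoveredByDisjointFamilies X Q M) :
    CoveredByDisjointFamilies X (fun s => ∃ a b, P a ∧ Q b ∧ s ⊆ a ∩ b) (N + M) := by
  obtain ⟨C, hC, hCd, hCc⟩ := hP.exists_columns (N + M + 1)
  obtain ⟨D, hD, hDd, hDc⟩ := hQ.exists_columns (N + M + 1)
  refine ⟨fun j => image2 (· ∩ ·) (C j) (D j), ?_, fun j => ?_, ?_⟩
  · rintro j _ ⟨c, hc, d, hd, rfl⟩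
    obtain ⟨hco, a, ha, hca⟩ := hC j c hc
    obtain ⟨hdo, b, hb, hdb⟩ := hD j d hd
    exact ⟨hco.inter hdo, a, b, ha, hb, inter_subset_inter hca hdb⟩
  · rintro _ ⟨c, hc, d, hd, rfl⟩ _ ⟨c', hc', d', hd', rfl⟩ hne
    rcases ne_or_eq c c' with hcc' | rfl
    · exact (hCd j hc hc' hcc').mono inter_subset_left inter_subset_left
    · have hdd' : d ≠ d' := by rintro rfl; exact hne rfl
      exact (hDd j hd hd' hdd').mono inter_subset_right inter_subset_right
  · refine eq_univ_of_forall fun x => ?_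
    obtain ⟨s, hs, hsx⟩ := hCc x
    obtain ⟨t, ht, htx⟩ := hDc x
    -- `N + M + 1` columns cannot all be among the at most `N + M` exceptional ones
    have hcard : #(s ∪ t) < #(Finset.univ : Finset (Fin (N + M + 1))) := by
      rw [Finset.card_univ, Fintype.card_fin]
      exact (Finset.card_union_le s t).trans_lt (by omega)
    obtain ⟨j, -, hj⟩ := Finset.exists_mem_notMem_of_card_lt_card hcard
    obtain ⟨c, hc, hxc⟩ := hsx j fun h => hj (Finset.mem_union_left t h)
    obtain ⟨d, hd, hxd⟩ := htx j fun h => hj (Finset.mem_union_right s h)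
    exact mem_iUnion.2 ⟨j, _, mem_image2_of_mem hc hd, hxc, hxd⟩

end CoveredByDisjointFamilies

theorem coveredByDisjointFamilies_of_iUnion_eq_univ {X : Type*} [TopologicalSpace X] {N : ℕ}
    {U : Fin (N + 1) → Set X} (hUo : ∀ i, IsOpen (U i)) (hU : ⋃ i, U i = univ) :
    CoveredByDisjointFamilies X (fun s => ∃ i, s = U i) N :=
  ⟨fun i => {U i}, fun i _ hs => hs ▸ ⟨hUo i, i, rfl⟩, fun _ => pairwiseDisjoint_singleton _ _,
    by simpa using hU⟩

theorem CatLE.of_coveredByDisjointFamilies {X : Type*} [TopologicalSpace X]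
    [PathConnectedSpace X] {N : ℕ} (h : CoveredByDisjointFamilies X ContractibleIn N) :
    CatLE X N :=
  let ⟨F, hF, hFd, hFc⟩ := h
  ⟨fun k => ⋃₀ F k, fun k => isOpen_sUnion fun s hs => (hF k s hs).1,
    fun k => .sUnion (fun s hs => (hF k s hs).1) (fun s hs => (hF k s hs).2) (hFd k), hFc⟩

section Depth

variable {Y : Type*} [PseudoEMetricSpace Y]

-- Each `infEDist · wᶜ` is 1-Lipschitz, so even an infinite supremum of them is continuous.
theorem continuous_iSup_infEDist_compl (T : Set (Set Y)) :
    Continuous fun y => ⨆ w ∈ T, infEDist y wᶜ :=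
  continuous_of_le_add_edist 1 ENNReal.one_ne_top fun y z => by
    rw [one_mul]
    exact iSup₂_le fun w hw => infEDist_le_infEDist_add_edist.trans
      (add_le_add (le_iSup₂ (f := fun w _ => infEDist z wᶜ) w hw) le_rfl)

-- `infEDist y wᶜ` measures how deep `y` lies inside `w`.
def depthCell (W : Set (Set Y)) (A : Finset (Set Y)) : Set Y :=
  {y | ∀ a ∈ A, ⨆ w ∈ W \ A, infEDist y wᶜ < infEDist y aᶜ}

theorem isOpen_depthCell (W : Set (Set Y)) (A : Finset (Set Y)) : IsOpen (depthCell W A) := by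
  have : depthCell W A = ⋂ a ∈ A, {y | ⨆ w ∈ W \ A, infEDist y wᶜ < infEDist y aᶜ} := by
    ext y; simp [depthCell]
  rw [this]
  exact isOpen_biInter_finset fun a _ =>
    isOpen_lt (continuous_iSup_infEDist_compl _) continuous_infEDist

theorem depthCell_subset {W : Set (Set Y)} {A : Finset (Set Y)} {a : Set Y} (ha : a ∈ A) :
    depthCell W A ⊆ a := fun y hy => by
  by_contra hya
  exact not_lt_zero ((hy a ha).trans_eq (infEDist_zero_of_mem hya))

theorem disjoint_depthCell {W : Set (Set Y)} {A A' : Finset (Set Y)} (hA : ↑A ⊆ W)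
    (hA' : ↑A' ⊆ W) (hne : A ≠ A') (hcard : #A = #A') :
    Disjoint (depthCell W A) (depthCell W A') := by
  obtain ⟨a, ha, ha'⟩ := Finset.not_subset.1 fun h =>
    hne (Finset.eq_of_subset_of_card_le h hcard.ge)
  obtain ⟨b, hb, hb'⟩ := Finset.not_subset.1 fun h =>
    hne (Finset.eq_of_subset_of_card_le h hcard.le).symm
  refine Set.disjoint_left.2 fun y hy hy' => ?_
  -- `b` is outside `A` and `a` is outside `A'`: the depths in `a` and `b` beat each other
  have hab : infEDist y bᶜ < infEDist y aᶜ :=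
    (le_iSup₂ (f := fun w (_ : w ∈ W \ A) => infEDist y wᶜ) b ⟨hA' hb, hb'⟩).trans_lt (hy a ha)
  have hba : infEDist y aᶜ < infEDist y bᶜ :=
    (le_iSup₂ (f := fun w (_ : w ∈ W \ A') => infEDist y wᶜ) a ⟨hA ha, ha'⟩).trans_lt (hy' b hb)
  exact hab.not_gt hba

theorem mem_depthCell {W : Set (Set Y)} (hWo : ∀ w ∈ W, IsOpen w) {y : Y} {A : Finset (Set Y)}
    (hA : ∀ w, w ∈ A ↔ w ∈ W ∧ y ∈ w) : y ∈ depthCell W A := by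
  intro a ha
  have hzero : ⨆ w ∈ W \ A, infEDist y wᶜ = 0 := by
    refine iSup₂_eq_bot.2 fun w hw => infEDist_zero_of_mem fun hyw => ?_
    exact hw.2 ((hA w).2 ⟨hw.1, hyw⟩)
  obtain ⟨haW, hya⟩ := (hA a).1 ha
  rw [hzero, infEDist_pos_iff_notMem_closure, (hWo a haW).isClosed_compl.closure_eq]
  exact not_not.2 hya

theorem coveredByDisjointFamilies_of_encard_le {n : ℕ} {W : Set (Set Y)}
    (hWo : ∀ w ∈ W, IsOpen w) (hW : ⋃₀ W = univ)
    (hmult : ∀ y : Y, {w ∈ W | y ∈ w}.encard ≤ (n + 1 : ℕ)) :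
    CoveredByDisjointFamilies Y (fun s => ∃ w ∈ W, s ⊆ w) n := by
  refine ⟨fun l => depthCell W '' {A | ↑A ⊆ W ∧ #A = l + 1}, ?_, fun l => ?_, ?_⟩
  · rintro l _ ⟨A, ⟨hAW, hA⟩, rfl⟩
    obtain ⟨a, ha⟩ := Finset.card_pos.1 (show 0 < #A by omega)
    exact ⟨isOpen_depthCell W A, a, hAW ha, depthCell_subset ha⟩
  · rintro _ ⟨A, ⟨hAW, hA⟩, rfl⟩ _ ⟨A', ⟨hA'W, hA'⟩, rfl⟩ hne
    exact disjoint_depthCell hAW hA'W (fun h => hne (h ▸ rfl)) (hA.trans hA'.symm)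
  · refine eq_univ_of_forall fun y => ?_
    have hfin : {w ∈ W | y ∈ w}.Finite := finite_of_encard_le_coe (hmult y)
    let A := hfin.toFinset
    have hA (w) : w ∈ A ↔ w ∈ W ∧ y ∈ w := hfin.mem_toFinset
    obtain ⟨w, hw, hyw⟩ := hW ▸ mem_univ y
    have hApos : 0 < #A := Finset.card_pos.2 ⟨w, (hA w).2 ⟨hw, hyw⟩⟩
    have hAle : #A ≤ n + 1 := by
      have := hmult y
      rwa [hfin.encard_eq_coe_toFinset_card, Nat.cast_le] at this
    refine mem_iUnion.2 ⟨⟨#A - 1, by omega⟩, _,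
      ⟨A, ⟨fun w hw => ((hA w).1 hw).1, by simp only; omega⟩, rfl⟩, mem_depthCell hWo hA⟩

theorem CovDimLE.coveredByDisjointFamilies {n : ℕ} (hdim : CovDimLE Y n) {C : Set (Set Y)}
    (hCo : ∀ c ∈ C, IsOpen c) (hC : ⋃₀ C = univ) :
    CoveredByDisjointFamilies Y (fun s => ∃ c ∈ C, s ⊆ c) n :=
  let ⟨_, hWo, hW, hWC, hmult⟩ := hdim C hCo hC
  (coveredByDisjointFamilies_of_encard_le hWo hW hmult).mono fun _ ⟨w, hw, hsw⟩ =>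
    let ⟨c, hc, hwc⟩ := hWC w hw
    ⟨c, hc, hsw.trans hwc⟩

end Depth

/-- Theorem 3.2: `cat X ≤ dim Y + cat* f` for a continuous map `f : X → Y` from a
path-connected normal space to a metrizable space. -/
theorem catLE_add_of_covDimLE_of_catStarLE
    {X Y : Type*} [TopologicalSpace X] [TopologicalSpace Y]
    [PathConnectedSpace X] [NormalSpace X] [TopologicalSpace.MetrizableSpace Y]
    (f : X → Y) (hf : Continuous f) (n m : ℕ)
    (hdim : CovDimLE Y n) (hcat : CatStarLE f m) :
    CatLE X (n + m) := by
  obtain ⟨U, hUo, hUc, hU⟩ := hcat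
  choose V hV hVU using hU
  let := TopologicalSpace.pseudoMetrizableSpacePseudoMetric Y
  have hY := hdim.coveredByDisjointFamilies (C := range fun y => interior (V y))
    (forall_mem_range.2 fun _ => isOpen_interior)
    (eq_univ_of_forall fun y => ⟨_, mem_range_self y, mem_interior_iff_mem_nhds.2 (hV y)⟩)
  have hX := (hY.preimage hf).inter (coveredByDisjointFamilies_of_iUnion_eq_univ hUo hUc)
  refine .of_coveredByDisjointFamilies (hX.mono ?_)
  rintro s ⟨_, _, ⟨t, ⟨_, ⟨y, rfl⟩, hty⟩, rfl⟩, ⟨i, rfl⟩, hs⟩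
  exact (hVU y i).mono fun x hx =>
    ⟨(hs hx).2, interior_subset (s := V y) (hty (hs hx).1)⟩
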